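/- arXiv:2008.02634 — 3 statements merged into one kernel-verified Lean document; each statement's English description precedes it below -/
import Mathlib

section
/- Let λ ∈ ℝ and let β_λ: Ṙ → Ṙ be the Möbius map β_λ(x) = (λx − 1)/(x + λ). If b ∈ SO_∞^∞ (i.e., b is a bounded smooth function on ℝ slowly oscillating at ∞ with lim_{x→∞} x^k b^{(k)}(x) = 0 for all k ∈ ℕ), then the composition c = b ∘ β_λ⁻¹ belongs to SO_λ^3, i.e., c ∈ SO_λ ∩ C³(ℝ \ {λ}) and lim_{y→λ} (D_λ^k c)(y) = 0 for k = 1,2,3, where D_λ c(y) = (y − λ)c′(y). -/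
open MeasureTheory Filter Topology Set

noncomputable section

/-- A Banach function norm on nonnegative measurable functions on ℝ (axioms (A1)–(A5)). -/
structure BFN where
  ρ : (ℝ → ENNReal) → ENNReal
  eq_zero_iff : ∀ f : ℝ → ENNReal, Measurable f → (ρ f = 0 ↔ f =ᵐ[volume] 0)
  smul_eq : ∀ (c : ENNReal) (f : ℝ → ENNReal), Measurable f → ρ (fun x => c * f x) = c * ρ f
  add_le : ∀ f g : ℝ → ENNReal, Measurable f → Measurable g →
    ρ (fun x => f x + g x) ≤ ρ f + ρ g
  mono : ∀ f g : ℝ → ENNReal, Measurable f → Measurable g →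
    (∀ᵐ x ∂volume, g x ≤ f x) → ρ g ≤ ρ f
  fatou : ∀ f : ℕ → ℝ → ENNReal, (∀ n, Measurable (f n)) →
    (∀ᵐ x ∂volume, Monotone fun n => f n x) →
    Tendsto (fun n => ρ (f n)) atTop (𝓝 (ρ fun x => ⨆ n, f n x))
  indicator_lt_top : ∀ E : Set ℝ, MeasurableSet E → volume E < ⊤ → ρ (E.indicator 1) < ⊤
  loc_L1 : ∀ E : Set ℝ, MeasurableSet E → volume E < ⊤ →
    ∃ C : ENNReal, C ≠ 0 ∧ C ≠ ⊤ ∧ ∀ f : ℝ → ENNReal, Measurable f →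
      (∫⁻ x in E, f x) ≤ C * ρ f

namespace BFN

variable (N : BFN)

/-- The (extended) norm of a complex-valued function in the Banach function space. -/
def norm' (f : ℝ → ℂ) : ENNReal := N.ρ fun x => (‖f x‖₊ : ENNReal)

/-- Membership in the Banach function space X(ℝ). -/
def Mem (f : ℝ → ℂ) : Prop := AEMeasurable f volume ∧ N.norm' f < ⊤

/-- A set of functions is dense in X(ℝ). -/
def DenseIn (S : Set (ℝ → ℂ)) : Prop :=
  ∀ f, N.Mem f → ∀ ε : ℝ, 0 < ε → ∃ g ∈ S, N.norm' (fun x => f x - g x) < ENNReal.ofReal ε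

/-- Separability of X(ℝ). -/
def Separable : Prop :=
  ∃ D : Set (ℝ → ℂ), D.Countable ∧ (∀ g ∈ D, N.Mem g) ∧ N.DenseIn D

/-- The associate (Köthe dual) norm ρ'. -/
def assoc : (ℝ → ENNReal) → ENNReal := fun g =>
  ⨆ f : {f : ℝ → ENNReal // Measurable f ∧ N.ρ f ≤ 1}, ∫⁻ x, f.1 x * g x

end BFN

/-- The non-centered Hardy–Littlewood maximal function (of a nonnegative function). -/
def maximalFn (g : ℝ → ENNReal) (x : ℝ) : ENNReal :=
  ⨆ (a : ℝ) (b : ℝ) (_ : a < b) (_ : x ∈ Set.Icc a b),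
    (ENNReal.ofReal (b - a))⁻¹ * ∫⁻ y in Set.Icc a b, g y

/-- Boundedness of the Hardy–Littlewood maximal operator with respect to a function norm. -/
def MaximalBounded (ρ : (ℝ → ENNReal) → ENNReal) : Prop :=
  ∃ C : ENNReal, C ≠ ⊤ ∧ ∀ g : ℝ → ENNReal, Measurable g → ρ (maximalFn g) ≤ C * ρ g

/-- The standing hypotheses: X(ℝ) separable, M bounded on X(ℝ) and on X'(ℝ). -/
def GoodBFN (N : BFN) : Prop := N.Separable ∧ MaximalBounded N.ρ ∧ MaximalBounded N.assoc

/-- The Fourier convolution operator W⁰(b) = F⁻¹ b F, on nice functions. -/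
def W0 (b f : ℝ → ℂ) : ℝ → ℂ :=
  FourierTransformInv.fourierInv (fun x => b x * FourierTransform.fourier f x)

/-- A bounded linear operator on X(ℝ) (linearity up to null functions). -/
structure OpOn (N : BFN) where
  toFun : (ℝ → ℂ) → (ℝ → ℂ)
  maps_mem : ∀ f, N.Mem f → N.Mem (toFun f)
  map_add_ae : ∀ f g, N.Mem f → N.Mem g →
    N.norm' (fun x => toFun (fun y => f y + g y) x - (toFun f x + toFun g x)) = 0
  map_smul_ae : ∀ (c : ℂ) (f), N.Mem f →
    N.norm' (fun x => toFun (fun y => c * f y) x - c * toFun f x) = 0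
  bounded : ∃ C : ENNReal, C ≠ ⊤ ∧ ∀ f, N.Mem f → N.norm' (toFun f) ≤ C * N.norm' f

/-- `T` has operator norm at most `C` on X(ℝ). -/
def OpNormLe (N : BFN) (T : OpOn N) (C : ENNReal) : Prop :=
  ∀ f, N.Mem f → N.norm' (T.toFun f) ≤ C * N.norm' f

/-- `T` is (an extension of) the Fourier convolution operator with symbol `b`:
it agrees a.e. with `W⁰(b)` on `L¹ ∩ L² ∩ X`. -/
def IsMultiplierOp (N : BFN) (b : ℝ → ℂ) (T : OpOn N) : Prop :=
  ∀ f : ℝ → ℂ, Integrable f volume → MemLp f 2 volume → N.Mem f →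
    N.norm' (fun x => T.toFun f x - W0 b f x) = 0

/-- `b` is a Fourier multiplier on X(ℝ). -/
def IsMultiplier (N : BFN) (b : ℝ → ℂ) : Prop :=
  MemLp b ⊤ volume ∧ ∃ T : OpOn N, IsMultiplierOp N b T

/-- The multiplier norm ‖b‖_{M_X} = ‖W⁰(b)‖_{B(X)}. -/
def mNorm (N : BFN) (b : ℝ → ℂ) : ENNReal :=
  sInf {C | ∃ T : OpOn N, IsMultiplierOp N b T ∧ OpNormLe N T C}

/-- A map of functions is a compact operator on X(ℝ): it maps X to X and the image of the
unit ball is totally bounded. -/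
def CompactMap (N : BFN) (T : (ℝ → ℂ) → (ℝ → ℂ)) : Prop :=
  (∀ f, N.Mem f → N.Mem (T f)) ∧
  ∀ ε : ℝ, 0 < ε → ∃ S : Set (ℝ → ℂ), S.Finite ∧
    ∀ f, N.Mem f → N.norm' f ≤ 1 → ∃ g ∈ S, N.norm' (fun x => T f x - g x) < ENNReal.ofReal ε

/-- A bounded linear operator on X(ℝ) is compact. -/
def IsCompactOp (N : BFN) (K : OpOn N) : Prop := CompactMap N K.toFun

/-- The oscillation of `f` over a set `E`. -/
def osc (f : ℝ → ℂ) (E : Set ℝ) : ENNReal :=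
  ⨆ s ∈ E, ⨆ t ∈ E, (‖f s - f t‖₊ : ENNReal)

/-- `f` slowly oscillates at a finite point `lam`. -/
def SlowOscAt (f : ℝ → ℂ) (lam : ℝ) : Prop :=
  ∀ r : ℝ, 0 < r → r < 1 → ∀ ε : ℝ, 0 < ε → ∃ δ : ℝ, 0 < δ ∧ ∀ x : ℝ, 0 < x → x < δ →
    osc f (Set.Icc (lam - x) (lam - r * x) ∪ Set.Icc (lam + r * x) (lam + x)) <
      ENNReal.ofReal ε

/-- `f` slowly oscillates at ∞. -/
def SlowOscAtInf (f : ℝ → ℂ) : Prop :=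
  ∀ r : ℝ, 0 < r → r < 1 → ∀ ε : ℝ, 0 < ε → ∃ R : ℝ, 0 < R ∧ ∀ x : ℝ, R < x →
    osc f (Set.Icc (-x) (-(r * x)) ∪ Set.Icc (r * x) x) < ENNReal.ofReal ε

/-- Boundedness of a function. -/
def Bdd (f : ℝ → ℂ) : Prop := ∃ M : ℝ, ∀ x, ‖f x‖ ≤ M

/-- The algebra SO_t, for t ∈ Ṙ = ℝ ∪ {∞} (encoded as `Option ℝ`, `none` = ∞):
bounded functions, continuous on Ṙ \ {t}, slowly oscillating at t. -/
def SO : Option ℝ → (ℝ → ℂ) → Prop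
  | some lam, f => Bdd f ∧ ContinuousOn f {lam}ᶜ ∧
      (∃ L : ℂ, Tendsto f (cocompact ℝ) (𝓝 L)) ∧ SlowOscAt f lam
  | none, f => Bdd f ∧ Continuous f ∧ SlowOscAtInf f

/-- The operator D_λ a (x) = (x − λ) a'(x). -/
def Dop (lam : ℝ) (a : ℝ → ℂ) : ℝ → ℂ := fun x => ((x : ℂ) - (lam : ℂ)) * deriv a x

/-- The operator D_∞ a (x) = x a'(x). -/
def DopInf (a : ℝ → ℂ) : ℝ → ℂ := fun x => (x : ℂ) * deriv a x

/-- The algebra SO_t^3 of C³ slowly oscillating functions with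
lim_{x→t} (D_t^k a)(x) = 0 for k = 1,2,3. -/
def SO3 : Option ℝ → (ℝ → ℂ) → Prop
  | some lam, a => SO (some lam) a ∧ ContDiffOn ℝ 3 a {lam}ᶜ ∧
      ∀ k : ℕ, 1 ≤ k → k ≤ 3 → Tendsto ((Dop lam)^[k] a) (𝓝[≠] lam) (𝓝 0)
  | none, a => SO none a ∧ ContDiff ℝ 3 a ∧
      ∀ k : ℕ, 1 ≤ k → k ≤ 3 → Tendsto (DopInf^[k] a) (cocompact ℝ) (𝓝 0)

/-- SO_{t,X(ℝ)}: the closure of SO_t^3 in the multiplier norm of X(ℝ). -/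
def SOX (N : BFN) (t : Option ℝ) (b : ℝ → ℂ) : Prop :=
  IsMultiplier N b ∧ ∀ ε : ℝ, 0 < ε → ∃ a, SO3 t a ∧
    IsMultiplier N (fun x => b x - a x) ∧
    mNorm N (fun x => b x - a x) < ENNReal.ofReal ε

/-- The *-algebra generated by all the SO_t, t ∈ Ṙ. -/
inductive SOgen : (ℝ → ℂ) → Prop
  | base (t : Option ℝ) (f : ℝ → ℂ) : SO t f → SOgen f
  | add {f g : ℝ → ℂ} : SOgen f → SOgen g → SOgen (fun x => f x + g x)
  | mul {f g : ℝ → ℂ} : SOgen f → SOgen g → SOgen (fun x => f x * g x)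
  | smul (c : ℂ) {f : ℝ → ℂ} : SOgen f → SOgen (fun x => c * f x)
  | star {f : ℝ → ℂ} : SOgen f → SOgen (fun x => starRingEnd ℂ (f x))

/-- SO^◇: the smallest C*-subalgebra of L^∞(ℝ) containing all SO_t. -/
def SOdiamond (f : ℝ → ℂ) : Prop :=
  MemLp f ⊤ volume ∧ ∀ ε : ℝ, 0 < ε → ∃ g, SOgen g ∧
    eLpNorm (fun x => f x - g x) ⊤ volume < ENNReal.ofReal ε

/-- The algebra generated by all the SO_{t,X(ℝ)}, t ∈ Ṙ. -/
inductive SOXgen (N : BFN) : (ℝ → ℂ) → Prop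
  | base (t : Option ℝ) (f : ℝ → ℂ) : SOX N t f → SOXgen N f
  | add {f g : ℝ → ℂ} : SOXgen N f → SOXgen N g → SOXgen N (fun x => f x + g x)
  | mul {f g : ℝ → ℂ} : SOXgen N f → SOXgen N g → SOXgen N (fun x => f x * g x)
  | smul (c : ℂ) {f : ℝ → ℂ} : SOXgen N f → SOXgen N (fun x => c * f x)

/-- SO_{X(ℝ)}^◇: the smallest Banach subalgebra of M_{X(ℝ)} containing all SO_{t,X(ℝ)}. -/
def SOXdiamond (N : BFN) (b : ℝ → ℂ) : Prop :=
  IsMultiplier N b ∧ ∀ ε : ℝ, 0 < ε → ∃ g, SOXgen N g ∧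
    IsMultiplier N (fun x => b x - g x) ∧
    mNorm N (fun x => b x - g x) < ENNReal.ofReal ε

/-- A multiplicative linear functional (character) on a set `S` of functions
(which respects a.e. equality, as elements of function algebras are a.e.-classes). -/
structure CharOn (S : Set (ℝ → ℂ)) where
  φ : (ℝ → ℂ) → ℂ
  map_ae : ∀ f g : ℝ → ℂ, f ∈ S → g ∈ S → f =ᵐ[volume] g → φ f = φ g
  map_add : ∀ f ∈ S, ∀ g ∈ S, φ (fun x => f x + g x) = φ f + φ g
  map_mul : ∀ f ∈ S, ∀ g ∈ S, φ (fun x => f x * g x) = φ f * φ g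
  map_smul : ∀ (c : ℂ), ∀ f ∈ S, φ (fun x => c * f x) = c * φ f
  map_one : φ (fun _ => 1) = 1

/-- The algebra C(Ṙ): continuous functions on ℝ having a limit at ∞. -/
def CRdot (f : ℝ → ℂ) : Prop := Continuous f ∧ ∃ L : ℂ, Tendsto f (cocompact ℝ) (𝓝 L)

/-- The character `χ` on `S` lies in the fiber over `t ∈ Ṙ`: its restriction to C(Ṙ)
is the evaluation at `t`. -/
def InFiber (S : Set (ℝ → ℂ)) (χ : CharOn S) : Option ℝ → Prop
  | some lam => ∀ f, f ∈ S → CRdot f → χ.φ f = f lam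
  | none => ∀ f, f ∈ S → CRdot f → ∀ L : ℂ, Tendsto f (cocompact ℝ) (𝓝 L) → χ.φ f = L

/-- The spectrum of `f` in the function algebra `S` (invertibility understood a.e.). -/
def specIn (S : Set (ℝ → ℂ)) (f : ℝ → ℂ) : Set ℂ :=
  {z | ¬ ∃ g ∈ S, (fun x => (f x - z) * g x) =ᵐ[volume] (fun _ => (1 : ℂ))}

/-- Positivity of an element of the function algebra `S`: self-adjoint with
spectrum contained in [0, ∞). -/
def IsPositiveIn (S : Set (ℝ → ℂ)) (f : ℝ → ℂ) : Prop :=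
  (∀ x, (f x).im = 0) ∧ specIn S f ⊆ {z : ℂ | 0 ≤ z.re ∧ z.im = 0}

/-- A character on a set `S` of operators which factors through the
compact-equivalence relation `R` (i.e. a character of the Calkin image). -/
structure CharOnOps (S : Set ((ℝ → ℂ) → (ℝ → ℂ)))
    (R : ((ℝ → ℂ) → (ℝ → ℂ)) → ((ℝ → ℂ) → (ℝ → ℂ)) → Prop) where
  φ : ((ℝ → ℂ) → (ℝ → ℂ)) → ℂ
  map_add : ∀ T ∈ S, ∀ U ∈ S, φ (fun f x => T f x + U f x) = φ T + φ U
  map_mul : ∀ T ∈ S, ∀ U ∈ S, φ (fun f => T (U f)) = φ T * φ U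
  map_smul : ∀ (c : ℂ), ∀ T ∈ S, φ (fun f x => c * T f x) = c * φ T
  congr : ∀ T ∈ S, ∀ U ∈ S, R T U → φ T = φ U



namespace CMA

noncomputable def phi (lam : ℝ) : ℝ → ℝ := fun y => (lam * y + 1) / (lam - y)

lemma hasDerivAt_phi (lam y : ℝ) (hy : y ≠ lam) :
    HasDerivAt (phi lam) ((lam^2+1)/(lam-y)^2) y := by
  have h : lam - y ≠ 0 := sub_ne_zero.mpr (Ne.symm hy)
  have h1 : HasDerivAt (fun y : ℝ => lam * y + 1) lam y := by
    simpa using ((hasDerivAt_id y).const_mul lam).add_const 1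
  have h2 : HasDerivAt (fun y : ℝ => lam - y) (-1) y := by
    simpa using (hasDerivAt_id y).const_sub lam
  have := h1.div h2 h
  exact this.congr_deriv (by ring)

lemma key_ident (lam y : ℝ) (hy : y ≠ lam) :
    (y - lam) * ((lam^2+1)/(lam-y)^2) = -(phi lam y + lam) := by
  have h : lam - y ≠ 0 := sub_ne_zero.mpr (Ne.symm hy)
  have : phi lam y = (lam^2+1)/(lam - y) - lam := by unfold phi; field_simp; ring
  rw [this]; field_simp; ring

noncomputable def g (lam : ℝ) (b : ℝ → ℂ) : ℕ → ℝ → ℂ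
  | 0 => b
  | (k+1) => fun x => -((x:ℂ) + lam) * deriv (g lam b k) x

lemma g_contDiff (lam : ℝ) (b : ℝ → ℂ) (hb : ContDiff ℝ ((⊤:ℕ∞) : WithTop ℕ∞) b) :
    ∀ k, ContDiff ℝ ((⊤:ℕ∞) : WithTop ℕ∞) (g lam b k) := by
  intro k
  induction k with
  | zero => exact hb
  | succ k ih =>
    have hx : ContDiff ℝ ((⊤:ℕ∞) : WithTop ℕ∞) (fun x : ℝ => -((x:ℂ) + lam)) :=
      (Complex.ofRealCLM.contDiff.add contDiff_const).neg
    exact hx.mul (contDiff_infty_iff_deriv.mp ih).2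

lemma iterate_eq (lam : ℝ) (b : ℝ → ℂ) (hb : ContDiff ℝ ((⊤:ℕ∞) : WithTop ℕ∞) b) (k : ℕ) :
    ∀ y, y ≠ lam → (Dop lam)^[k] (fun y => b (phi lam y)) y = g lam b k (phi lam y) := by
  induction k with
  | zero => intro y _; rfl
  | succ k ih =>
    intro y hy
    rw [Function.iterate_succ_apply']
    have hmem : ({lam}ᶜ : Set ℝ) ∈ 𝓝 y := isOpen_compl_singleton.mem_nhds hy
    have hEq : (Dop lam)^[k] (fun y => b (phi lam y)) =ᶠ[𝓝 y]
        fun z => g lam b k (phi lam z) := by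
      filter_upwards [hmem] with z hz
      exact ih z hz
    have hgd : HasDerivAt (g lam b k) (deriv (g lam b k) (phi lam y)) (phi lam y) :=
      (((g_contDiff lam b hb k).differentiable (by simp)) (phi lam y)).hasDerivAt
    have hcomp : HasDerivAt (fun z => g lam b k (phi lam z))
        (((lam^2+1)/(lam-y)^2) • deriv (g lam b k) (phi lam y)) y :=
      hgd.scomp y (hasDerivAt_phi lam y hy)
    have hder : deriv ((Dop lam)^[k] (fun y => b (phi lam y))) y
        = ((lam^2+1)/(lam-y)^2) • deriv (g lam b k) (phi lam y) := by
      rw [hEq.deriv_eq]; exact hcomp.deriv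
    show ((y:ℂ) - lam) * _ = _
    rw [hder]
    calc ((y:ℂ) - lam) * (((lam^2+1)/(lam-y)^2 : ℝ) • deriv (g lam b k) (phi lam y))
        = ((((y - lam) * ((lam^2+1)/(lam-y)^2) : ℝ)) : ℂ) * deriv (g lam b k) (phi lam y) := by
          rw [Complex.real_smul]; push_cast; ring
      _ = -((phi lam y:ℂ) + lam) * deriv (g lam b k) (phi lam y) := by
          rw [key_ident lam y hy]; push_cast; ring_nf
      _ = g lam b (k+1) (phi lam y) := rfl

lemma ev_large (M : ℝ) : ∀ᶠ x : ℝ in cocompact ℝ, M ≤ |x| := by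
  rw [cocompact_eq_atBot_atTop]
  constructor
  · filter_upwards [eventually_le_atBot (-M)] with x hx
    calc M ≤ -x := by linarith
    _ ≤ |x| := by rw [abs_eq_max_neg]; exact le_max_right _ _
  · filter_upwards [eventually_ge_atTop M] with x hx
    exact hx.trans (le_abs_self x)

lemma tendsto_term (lam : ℝ) (b : ℝ → ℂ)
    (hD : ∀ k : ℕ, 1 ≤ k →
      Tendsto (fun x : ℝ => (x : ℂ) ^ k * iteratedDeriv k b x) (cocompact ℝ) (𝓝 0))
    (j : ℕ) (hj : 1 ≤ j) :
    Tendsto (fun x : ℝ => ((x:ℂ) + lam)^j * iteratedDeriv j b x) (cocompact ℝ) (𝓝 0) := by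
  apply squeeze_zero_norm' (a := fun x : ℝ => 2^j * ‖(x:ℂ)^j * iteratedDeriv j b x‖)
  · filter_upwards [ev_large (max 1 (|lam|))] with x hx
    have hx1 : (1:ℝ) ≤ |x| := le_trans (le_max_left _ _) hx
    have hxl : |lam| ≤ |x| := le_trans (le_max_right _ _) hx
    have h1 : ‖(x:ℂ) + lam‖ ≤ 2 * ‖(x:ℂ)‖ := by
      calc ‖(x:ℂ) + lam‖ ≤ ‖(x:ℂ)‖ + ‖(lam:ℂ)‖ := norm_add_le _ _
        _ ≤ 2 * ‖(x:ℂ)‖ := by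
          simp only [Complex.norm_real, Real.norm_eq_abs]; linarith
    calc ‖((x:ℂ) + lam)^j * iteratedDeriv j b x‖
        = ‖(x:ℂ) + lam‖^j * ‖iteratedDeriv j b x‖ := by rw [norm_mul, norm_pow]
      _ ≤ (2 * ‖(x:ℂ)‖)^j * ‖iteratedDeriv j b x‖ := by gcongr
      _ = 2^j * ‖(x:ℂ)^j * iteratedDeriv j b x‖ := by
          rw [norm_mul, norm_pow, mul_pow]; ring
  · have := ((hD j hj).norm).const_mul (2^j : ℝ)
    simpa using this

lemma tendsto_phi (lam : ℝ) : Tendsto (phi lam) (𝓝[≠] lam) (cocompact ℝ) := by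
  apply tendsto_cocompact_of_tendsto_dist_comp_atTop (0:ℝ)
  have t1 : Tendsto (fun y => lam - y) (𝓝[≠] lam) (𝓝[≠] (0:ℝ)) := by
    rw [tendsto_nhdsWithin_iff]
    constructor
    · have : Tendsto (fun y : ℝ => lam - y) (𝓝 lam) (𝓝 0) := by
        have h := ((continuous_const (y := lam)).sub continuous_id).tendsto lam
        simp at h; exact h
      exact this.mono_left nhdsWithin_le_nhds
    · filter_upwards [self_mem_nhdsWithin] with y hy
      exact sub_ne_zero.mpr (Ne.symm hy)
  have h2 : Tendsto (fun y => ‖(lam - y)⁻¹‖) (𝓝[≠] lam) atTop :=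
    tendsto_norm_inv_nhdsNE_zero_atTop.comp t1
  have h3 : Tendsto (fun y => ‖(lam - y)⁻¹‖ + -|lam|) (𝓝[≠] lam) atTop :=
    tendsto_atTop_add_const_right _ _ h2
  apply tendsto_atTop_mono' _ _ h3
  filter_upwards [self_mem_nhdsWithin] with y hy
  have hne : lam - y ≠ 0 := sub_ne_zero.mpr (Ne.symm hy)
  have hphi : phi lam y = (lam^2+1)/(lam - y) - lam := by unfold phi; field_simp; ring
  have habs : |lam - y|⁻¹ ≤ |(lam^2+1)/(lam - y)| := by
    rw [abs_div, div_eq_mul_inv]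
    have h1 : (1:ℝ) ≤ |lam^2+1| := by
      rw [abs_of_pos (by positivity)]; nlinarith [sq_nonneg lam]
    nlinarith [abs_nonneg (lam - y), inv_nonneg.mpr (abs_nonneg (lam - y)), h1,
      mul_le_mul_of_nonneg_right h1 (inv_nonneg.mpr (abs_nonneg (lam - y)))]
  calc ‖(lam - y)⁻¹‖ + -|lam| = |lam - y|⁻¹ - |lam| := by
        rw [Real.norm_eq_abs, abs_inv]; ring
    _ ≤ |(lam^2+1)/(lam - y)| - |lam| := by linarith
    _ ≤ |(lam^2+1)/(lam - y) - lam| := by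
        have := abs_sub_abs_le_abs_sub ((lam^2+1)/(lam - y)) lam
        linarith
    _ = dist (phi lam y) 0 := by rw [Real.dist_eq, sub_zero, hphi]

variable (lam : ℝ) (b : ℝ → ℂ)

lemma hdX (x : ℝ) : HasDerivAt (fun x : ℝ => ((x:ℂ) + lam)) 1 x := by
  simpa using (Complex.ofRealCLM.hasDerivAt (x := x)).add_const (lam : ℂ)

lemma g1_apply (x : ℝ) :
    g lam b 1 x = -(((x:ℂ)+lam) * iteratedDeriv 1 b x) := by
  show -((x:ℂ) + lam) * deriv b x = _
  rw [iteratedDeriv_one]; ring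

variable (hb : ContDiff ℝ ((⊤:ℕ∞) : WithTop ℕ∞) b)
include hb

lemma hdB (j : ℕ) (x : ℝ) :
    HasDerivAt (iteratedDeriv j b) (iteratedDeriv (j+1) b x) x := by
  have hdiff : Differentiable ℝ (iteratedDeriv j b) :=
    hb.differentiable_iteratedDeriv j (by exact_mod_cast WithTop.coe_lt_top j)
  have h := (hdiff x).hasDerivAt
  rwa [show deriv (iteratedDeriv j b) x = iteratedDeriv (j+1) b x from by
    rw [iteratedDeriv_succ]]
  at h

lemma hd_g1 (x : ℝ) : HasDerivAt (g lam b 1)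
    (-(iteratedDeriv 1 b x + ((x:ℂ)+lam) * iteratedDeriv 2 b x)) x := by
  have h1 : HasDerivAt (fun x : ℝ => iteratedDeriv 1 b x)
      (iteratedDeriv 2 b x) x := hdB b hb 1 x
  have hg1 : (g lam b 1) = fun x : ℝ => -(((x:ℂ)+lam) * iteratedDeriv 1 b x) :=
    funext (g1_apply lam b)
  rw [hg1]
  have := ((hdX lam x).mul h1).neg
  exact this.congr_deriv (by ring)

lemma g2_apply (x : ℝ) :
    g lam b 2 x = ((x:ℂ)+lam) * iteratedDeriv 1 b x
      + ((x:ℂ)+lam)^2 * iteratedDeriv 2 b x := by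
  show -((x:ℂ) + lam) * deriv (g lam b 1) x = _
  rw [(hd_g1 lam b hb x).deriv]; ring

lemma hd_g2 (x : ℝ) : HasDerivAt (g lam b 2)
    (iteratedDeriv 1 b x + 3 * ((x:ℂ)+lam) * iteratedDeriv 2 b x
      + ((x:ℂ)+lam)^2 * iteratedDeriv 3 b x) x := by
  have hg2 : (g lam b 2) = fun x : ℝ => ((x:ℂ)+lam) * iteratedDeriv 1 b x
      + ((x:ℂ)+lam)^2 * iteratedDeriv 2 b x := funext (g2_apply lam b hb)
  rw [hg2]
  have hsq : HasDerivAt (fun x : ℝ => ((x:ℂ)+lam)^2) (2*((x:ℂ)+lam)) x := by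
    have h := (hdX lam x).mul (hdX lam x)
    have e : (fun x : ℝ => ((x:ℂ)+lam)^2) = fun x : ℝ => ((x:ℂ)+lam)*((x:ℂ)+lam) := by
      funext y; ring
    rw [e]
    exact h.congr_deriv (by ring)
  have h1 : HasDerivAt (fun x : ℝ => ((x:ℂ)+lam) * iteratedDeriv 1 b x)
      (1 * iteratedDeriv 1 b x + ((x:ℂ)+lam) * iteratedDeriv 2 b x) x :=
    (hdX lam x).mul (hdB b hb 1 x)
  have h2 : HasDerivAt (fun x : ℝ => ((x:ℂ)+lam)^2 * iteratedDeriv 2 b x)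
      (2*((x:ℂ)+lam) * iteratedDeriv 2 b x + ((x:ℂ)+lam)^2 * iteratedDeriv 3 b x) x :=
    hsq.mul (hdB b hb 2 x)
  have := h1.add h2
  exact this.congr_deriv (by ring)

lemma g3_apply (x : ℝ) :
    g lam b 3 x = -(((x:ℂ)+lam) * iteratedDeriv 1 b x
      + 3 * ((x:ℂ)+lam)^2 * iteratedDeriv 2 b x
      + ((x:ℂ)+lam)^3 * iteratedDeriv 3 b x) := by
  show -((x:ℂ) + lam) * deriv (g lam b 2) x = _
  rw [(hd_g2 lam b hb x).deriv]; ring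

lemma tendsto_g
    (tendsto_term : ∀ j : ℕ, 1 ≤ j →
      Tendsto (fun x : ℝ => ((x:ℂ) + lam)^j * iteratedDeriv j b x) (cocompact ℝ) (𝓝 0))
    (k : ℕ) (hk1 : 1 ≤ k) (hk3 : k ≤ 3) :
    Tendsto (g lam b k) (cocompact ℝ) (𝓝 0) := by
  have T1 := tendsto_term 1 (by norm_num)
  have T2 := tendsto_term 2 (by norm_num)
  have T3 := tendsto_term 3 (by norm_num)
  interval_cases k
  · have := T1.neg
    simp only [neg_zero] at this
    apply this.congr
    intro x; rw [g1_apply lam b x]; ring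
  · have := T1.add T2
    simp only [add_zero] at this
    apply this.congr
    intro x; rw [g2_apply lam b hb x]; ring
  · have := ((T1.add (T2.const_mul 3)).add T3).neg
    simp only [mul_zero, add_zero, neg_zero] at this
    apply this.congr
    intro x; rw [g3_apply lam b hb x]; ring

omit hb

lemma osc_comp_le (f : ℝ → ℂ) (h : ℝ → ℝ) (E F : Set ℝ) (hEF : ∀ s ∈ E, h s ∈ F) :
    osc (fun y => f (h y)) E ≤ osc f F := by
  apply iSup₂_le; intro s hs; apply iSup₂_le; intro t ht
  exact le_iSup₂_of_le (h s) (hEF s hs) (le_iSup₂_of_le (h t) (hEF t ht) le_rfl)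

lemma tendsto_phi_cocompact :
    Tendsto (phi lam) (cocompact ℝ) (𝓝 (-lam)) := by
  have key : ∀ (l : Filter ℝ), Tendsto (fun y : ℝ => 1/y) l (𝓝 0) →
      (∀ᶠ y : ℝ in l, y ≠ 0) → Tendsto (phi lam) l (𝓝 (-lam)) := by
    intro l hinv hne
    have h1 : Tendsto (fun y : ℝ => (lam + 1/y)/(lam * (1/y) - 1)) l (𝓝 (-lam)) := by
      have hnum : Tendsto (fun y : ℝ => lam + 1/y) l (𝓝 lam) := by
        simpa using (tendsto_const_nhds (x := lam)).add hinv
      have hden : Tendsto (fun y : ℝ => lam * (1/y) - 1) l (𝓝 (-1)) := by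
        have := ((tendsto_const_nhds (x := lam)).mul hinv).sub_const 1
        simpa using this
      have h2 := hnum.div hden (by norm_num : (-1:ℝ) ≠ 0)
      have hval : lam / (-1:ℝ) = -lam := by field_simp
      rw [hval] at h2
      exact h2
    apply h1.congr'
    filter_upwards [hne] with y hy
    show (lam + 1/y)/(lam * (1/y) - 1) = phi lam y
    unfold phi
    rcases eq_or_ne (lam - y) 0 with h | h
    · have hyl : y = lam := by linarith
      subst hyl
      have d1 : y * (1/y) - 1 = 0 := by field_simp; norm_num
      rw [d1, div_zero, sub_self, div_zero]
    · field_simp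
  rw [cocompact_eq_atBot_atTop, tendsto_sup]
  constructor
  · refine key _ ?_ ?_
    · have h3 := (tendsto_inv_atTop_zero (𝕜 := ℝ)).comp tendsto_neg_atBot_atTop
      have h4 := h3.neg
      simp only [neg_zero] at h4
      apply h4.congr
      intro y
      simp only [one_div, Function.comp_apply, inv_neg, neg_neg]
    · filter_upwards [eventually_lt_atBot (0:ℝ)] with y hy; exact ne_of_lt hy
  · refine key _ ?_ ?_
    · simpa [one_div] using (tendsto_inv_atTop_zero (𝕜 := ℝ))
    · filter_upwards [eventually_gt_atTop (0:ℝ)] with y hy; exact ne_of_gt hy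

lemma slowOscAt_comp (hso : SlowOscAtInf b) :
    SlowOscAt (fun y => b (phi lam y)) lam := by
  intro r hr0 hr1 ε hε
  obtain ⟨R, hR0, hR⟩ := hso (r/2) (by linarith) (by linarith) ε hε
  set μ := lam^2 + 1 with hμ
  have hμ1 : (1:ℝ) ≤ μ := by nlinarith [sq_nonneg lam]
  have hμ0 : (0:ℝ) < μ := by linarith
  refine ⟨min (μ/(4*(|lam|+1))) (1/(r*(R+1))), ?_, ?_⟩
  · apply lt_min
    · apply div_pos hμ0; positivity
    · positivity
  intro x hx0 hxδ
  have hx1 : x < μ/(4*(|lam|+1)) := lt_of_lt_of_le hxδ (min_le_left _ _)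
  have hx2 : x < 1/(r*(R+1)) := lt_of_lt_of_le hxδ (min_le_right _ _)
  have hrx : 0 < r * x := by positivity
  set A := μ/(r*x) with hA
  have hA0 : 0 < A := div_pos hμ0 hrx
  have hrA : r * A = μ / x := by rw [hA]; field_simp
  have hkey : 4*(|lam|+1) < r*A := by
    rw [hrA, lt_div_iff₀ hx0]
    have := (lt_div_iff₀ (by positivity : (0:ℝ) < 4*(|lam|+1))).mp hx1
    nlinarith
  set X := A + |lam| with hX
  have hXR : R < X := by
    have h6 : x * (r*(R+1)) < 1 := (lt_div_iff₀ (by positivity)).mp hx2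
    have h7 : R + 1 < 1/(r*x) := by rw [lt_div_iff₀ hrx]; nlinarith
    have h8 : 1/(r*x) ≤ A := by rw [hA]; gcongr
    have := abs_nonneg lam
    linarith
  have hrlam : r * |lam| ≤ |lam| := mul_le_of_le_one_left (abs_nonneg lam) hr1.le
  have hmap : ∀ y ∈ Icc (lam - x) (lam - r*x) ∪ Icc (lam + r*x) (lam + x),
      phi lam y ∈ Icc (-X) (-(r/2*X)) ∪ Icc (r/2*X) X := by
    intro y hy
    rcases hy with hy | hy
    · obtain ⟨h1, h2⟩ := hy
      have ht1 : r*x ≤ lam - y := by linarith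
      have ht2 : lam - y ≤ x := by linarith
      have htpos : 0 < lam - y := lt_of_lt_of_le hrx ht1
      have hphi : phi lam y = μ/(lam-y) - lam := by
        have hne : lam - y ≠ 0 := ne_of_gt htpos
        rw [hμ]; unfold phi; field_simp; ring
      have e1 : μ/x ≤ μ/(lam-y) := by gcongr
      have e2 : μ/(lam-y) ≤ A := by rw [hA]; gcongr
      right
      rw [hphi]
      constructor
      · rw [hX]
        linarith [le_abs_self lam, neg_abs_le lam, abs_nonneg lam, e1, hrA, hkey, hrlam]
      · rw [hX]
        linarith [le_abs_self lam, neg_abs_le lam, e2]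
    · obtain ⟨h1, h2⟩ := hy
      have ht1 : r*x ≤ y - lam := by linarith
      have ht2 : y - lam ≤ x := by linarith
      have htpos : 0 < y - lam := lt_of_lt_of_le hrx ht1
      have hphi : phi lam y = -(μ/(y-lam)) - lam := by
        have hne : y - lam ≠ 0 := ne_of_gt htpos
        have hne2 : lam - y ≠ 0 := by intro h; apply hne; linarith
        rw [hμ]; unfold phi; field_simp; ring
      have e1 : μ/x ≤ μ/(y-lam) := by gcongr
      have e2 : μ/(y-lam) ≤ A := by rw [hA]; gcongr
      left
      rw [hphi]
      constructor
      · rw [hX]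
        linarith [le_abs_self lam, neg_abs_le lam, e2]
      · rw [hX]
        linarith [le_abs_self lam, neg_abs_le lam, abs_nonneg lam, e1, hrA, hkey, hrlam]
  have hosc := osc_comp_le b (phi lam) _ _ hmap
  exact lt_of_le_of_lt hosc (hR X hXR)

end CMA

/-- If b ∈ SO_∞^∞ (bounded, smooth, slowly oscillating at ∞, with x^k b^{(k)}(x) → 0 for all
k ≥ 1), then c = b ∘ β_λ⁻¹ belongs to SO_λ^3, where β_λ⁻¹(y) = (λy + 1)/(λ − y). -/
theorem comp_Moebius_mem_SO3 (lam : ℝ) (b : ℝ → ℂ)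
    (hb_smooth : ContDiff ℝ (⊤ : ℕ∞) b) (hb : SO none b)
    (hD : ∀ k : ℕ, 1 ≤ k →
      Tendsto (fun x : ℝ => (x : ℂ) ^ k * iteratedDeriv k b x) (cocompact ℝ) (𝓝 0)) :
    SO3 (some lam) (fun y : ℝ => b ((lam * y + 1) / (lam - y))) := by
  have hb3 : ContDiff ℝ ((⊤:ℕ∞) : WithTop ℕ∞) b := hb_smooth.of_le (by simp)
  obtain ⟨hBdd, hCont, hSOI⟩ := hb
  have hcompl : ∀ y : ℝ, y ∈ ({lam}ᶜ : Set ℝ) → lam - y ≠ 0 := by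
    intro y hy
    exact sub_ne_zero.mpr (Ne.symm hy)
  refine ⟨⟨?_, ?_, ?_, ?_⟩, ?_, ?_⟩
  · obtain ⟨M, hM⟩ := hBdd
    exact ⟨M, fun y => hM _⟩
  · have hφc : ContinuousOn (CMA.phi lam) {lam}ᶜ := by
      apply ContinuousOn.div
      · fun_prop
      · fun_prop
      · exact hcompl
    exact hCont.comp_continuousOn hφc
  · exact ⟨b (-lam), (hCont.tendsto (-lam)).comp (CMA.tendsto_phi_cocompact lam)⟩
  · exact CMA.slowOscAt_comp lam b hSOI
  · have hφ3 : ContDiffOn ℝ 3 (CMA.phi lam) {lam}ᶜ := by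
      apply ContDiffOn.div
      · exact (contDiff_const.mul contDiff_id |>.add contDiff_const).contDiffOn
      · exact (contDiff_const.sub contDiff_id).contDiffOn
      · exact hcompl
    exact (hb_smooth.of_le (WithTop.coe_le_coe.mpr le_top)).comp_contDiffOn hφ3
  · intro k hk1 hk3
    have hgt := CMA.tendsto_g lam b hb3 (CMA.tendsto_term lam b hD) k hk1 hk3
    have htot := hgt.comp (CMA.tendsto_phi lam)
    apply htot.congr'
    filter_upwards [self_mem_nhdsWithin] with y hy
    exact (CMA.iterate_eq lam b hb3 k y hy).symm
end
end

section
/- For every t ∈ Ṙ, the C*-algebra SO^◇ is SO_t-compressible modulo every multiplicative linear functional η in the fiber M_t(SO_t): for each x ∈ SO^◇ and ε > 0 there exist a positive element b ∈ SO_t with |η(b)| = ‖b‖ = 1 and an element y ∈ SO_t such that ‖bxb − y‖_{L^∞(ℝ)} < ε. -/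
open MeasureTheory Filter Topology Set

noncomputable section

/-! Write `x ∈ SO^◇` as `g + (x - g)` with `g` in the *-algebra generated by the `SO_μ` and
`‖x - g‖_∞` small. A function in `SO_μ` with `μ ≠ t` is continuous at `t`, so near `t` it is
a constant plus a function tending to `0`; by induction, `g = h + r` with `h ∈ SO_t` and `r → 0`
at `t`. A continuous bump `0 ≤ b ≤ 1`, equal to `1` near `t` and supported where `|r| ≤ ε/4`,
lies in `C(Ṙ)`, so `η(b) = b(t) = 1`, and `b x b` is within `ε` of `y = b² h ∈ SO_t`. -/

/-- The trace on `ℝ` of the neighbourhood filter of `t ∈ Ṙ`. -/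
def nhdsRdot : Option ℝ → Filter ℝ
  | some lam => 𝓝 lam
  | none => cocompact ℝ

lemma ENNReal.tendsto_nhds_zero_iff_ofReal {ι : Type*} {l : Filter ι} {u : ι → ENNReal} :
    Tendsto u l (𝓝 0) ↔ ∀ ε : ℝ, 0 < ε → ∀ᶠ i in l, u i < ENNReal.ofReal ε := by
  rw [ENNReal.nhds_zero_basis.tendsto_right_iff]
  refine ⟨fun h ε hε => h _ (ENNReal.ofReal_pos.2 hε), fun h a ha => ?_⟩
  obtain ⟨r, -, hr0, hra⟩ := ENNReal.lt_iff_exists_real_btwn.1 ha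
  filter_upwards [h r (ENNReal.ofReal_pos.1 hr0)] with i hi using hi.trans hra

section Osc

variable {f g : ℝ → ℂ}

lemma coe_nnnorm_le_ofReal {E : Type*} [SeminormedAddGroup E] {z : E} {a : ℝ} (h : ‖z‖ ≤ a) :
    (‖z‖₊ : ENNReal) ≤ ENNReal.ofReal a := by
  rw [← ENNReal.ofReal_coe_nnreal, coe_nnnorm]
  exact ENNReal.ofReal_le_ofReal h

lemma osc_le {E : Set ℝ} {C : ENNReal} (h : ∀ s ∈ E, ∀ u ∈ E, (‖f s - f u‖₊ : ENNReal) ≤ C) :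
    osc f E ≤ C :=
  iSup₂_le fun s hs => iSup₂_le fun u hu => h s hs u hu

lemma nnnorm_sub_le_osc {E : Set ℝ} {s u : ℝ} (hs : s ∈ E) (hu : u ∈ E) :
    (‖f s - f u‖₊ : ENNReal) ≤ osc f E :=
  le_iSup₂_of_le s hs (le_iSup₂_of_le u hu le_rfl)

lemma osc_le_of_norm_sub_le {E : Set ℝ} {c : ℂ} {a : ℝ} (h : ∀ s ∈ E, ‖f s - c‖ ≤ a) :
    osc f E ≤ ENNReal.ofReal (2 * a) := by
  refine osc_le fun s hs u hu => coe_nnnorm_le_ofReal ?_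
  calc ‖f s - f u‖ = ‖(f s - c) - (f u - c)‖ := by rw [sub_sub_sub_cancel_right]
    _ ≤ ‖f s - c‖ + ‖f u - c‖ := norm_sub_le _ _
    _ ≤ 2 * a := by linarith [h s hs, h u hu]

lemma osc_add_le (E : Set ℝ) : osc (fun s => f s + g s) E ≤ osc f E + osc g E := by
  refine osc_le fun s hs u hu => ?_
  rw [add_sub_add_comm]
  exact (ENNReal.coe_le_coe.2 (nnnorm_add_le _ _)).trans <| by
    push_cast; exact add_le_add (nnnorm_sub_le_osc hs hu) (nnnorm_sub_le_osc hs hu)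

lemma osc_mul_le {Mf Mg : ℝ} (hf : ∀ s, ‖f s‖ ≤ Mf) (hg : ∀ s, ‖g s‖ ≤ Mg) (E : Set ℝ) :
    osc (fun s => f s * g s) E ≤ ENNReal.ofReal Mf * osc g E + osc f E * ENNReal.ofReal Mg := by
  refine osc_le fun s hs u hu => ?_
  have hsplit : f s * g s - f u * g u = f s * (g s - g u) + (f s - f u) * g u := by ring
  rw [hsplit]
  refine (ENNReal.coe_le_coe.2 (nnnorm_add_le _ _)).trans ?_
  simp only [ENNReal.coe_add, nnnorm_mul, ENNReal.coe_mul]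
  exact add_le_add (mul_le_mul' (coe_nnnorm_le_ofReal (hf s)) (nnnorm_sub_le_osc hs hu))
    (mul_le_mul' (nnnorm_sub_le_osc hs hu) (coe_nnnorm_le_ofReal (hg u)))

lemma osc_conj (E : Set ℝ) : osc (fun s => starRingEnd ℂ (f s)) E = osc f E := by
  simp only [osc, ← map_sub, RCLike.nnnorm_conj]

variable {ι : Type*} {l : Filter ι} {E : ι → Set ℝ}

lemma tendsto_osc_add (hf : Tendsto (fun i => osc f (E i)) l (𝓝 0))
    (hg : Tendsto (fun i => osc g (E i)) l (𝓝 0)) :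
    Tendsto (fun i => osc (fun s => f s + g s) (E i)) l (𝓝 0) :=
  tendsto_of_tendsto_of_tendsto_of_le_of_le tendsto_const_nhds (by simpa using hf.add hg)
    (fun _ => zero_le) fun i => osc_add_le (E i)

lemma tendsto_osc_mul (hbf : Bdd f) (hbg : Bdd g) (hf : Tendsto (fun i => osc f (E i)) l (𝓝 0))
    (hg : Tendsto (fun i => osc g (E i)) l (𝓝 0)) :
    Tendsto (fun i => osc (fun s => f s * g s) (E i)) l (𝓝 0) := by
  obtain ⟨Mf, hMf⟩ := hbf
  obtain ⟨Mg, hMg⟩ := hbg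
  have hbound :=
    (ENNReal.Tendsto.const_mul (a := ENNReal.ofReal Mf) hg (Or.inr ENNReal.ofReal_ne_top)).add
      (ENNReal.Tendsto.mul_const (b := ENNReal.ofReal Mg) hf (Or.inr ENNReal.ofReal_ne_top))
  exact tendsto_of_tendsto_of_tendsto_of_le_of_le tendsto_const_nhds (by simpa using hbound)
    (fun _ => zero_le) fun i => osc_mul_le hMf hMg (E i)

lemma tendsto_osc_of_tendsto {F : Filter ℝ} {c : ℂ} (hf : Tendsto f F (𝓝 c))
    (hE : Tendsto E l F.smallSets) : Tendsto (fun i => osc f (E i)) l (𝓝 0) := by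
  rw [ENNReal.tendsto_nhds_zero_iff_ofReal]
  intro ε hε
  filter_upwards [tendsto_smallSets_iff.1 hE _ (Metric.tendsto_nhds.1 hf (ε / 3) (by positivity))]
    with i hi
  calc osc f (E i) ≤ ENNReal.ofReal (2 * (ε / 3)) :=
        osc_le_of_norm_sub_le fun s hs => (dist_eq_norm (f s) c).symm.trans_le (hi hs).le
    _ < ENNReal.ofReal ε := (ENNReal.ofReal_lt_ofReal_iff hε).2 (by linarith)

end Osc

section SlowOsc

variable {f g : ℝ → ℂ} {lam : ℝ}

lemma slowOscAt_iff : SlowOscAt f lam ↔ ∀ r : ℝ, 0 < r → r < 1 →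
    Tendsto (fun x => osc f (Icc (lam - x) (lam - r * x) ∪ Icc (lam + r * x) (lam + x)))
      (𝓝[>] 0) (𝓝 0) := by
  simp only [SlowOscAt, ENNReal.tendsto_nhds_zero_iff_ofReal, (nhdsGT_basis (0 : ℝ)).eventually_iff,
    mem_Ioo, and_imp]

lemma slowOscAtInf_iff : SlowOscAtInf f ↔ ∀ r : ℝ, 0 < r → r < 1 →
    Tendsto (fun x => osc f (Icc (-x) (-(r * x)) ∪ Icc (r * x) x)) atTop (𝓝 0) := by
  simp only [SlowOscAtInf, ENNReal.tendsto_nhds_zero_iff_ofReal,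
    (atTop_basis_Ioi' (0 : ℝ)).eventually_iff, mem_Ioi]

lemma SlowOscAt.add (hf : SlowOscAt f lam) (hg : SlowOscAt g lam) :
    SlowOscAt (fun s => f s + g s) lam := by
  rw [slowOscAt_iff] at *
  exact fun r hr hr1 => tendsto_osc_add (hf r hr hr1) (hg r hr hr1)

lemma SlowOscAt.mul (hbf : Bdd f) (hbg : Bdd g) (hf : SlowOscAt f lam) (hg : SlowOscAt g lam) :
    SlowOscAt (fun s => f s * g s) lam := by
  rw [slowOscAt_iff] at *
  exact fun r hr hr1 => tendsto_osc_mul hbf hbg (hf r hr hr1) (hg r hr hr1)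

lemma SlowOscAt.conj (hf : SlowOscAt f lam) : SlowOscAt (fun s => starRingEnd ℂ (f s)) lam := by
  simpa only [slowOscAt_iff, osc_conj] using hf

lemma SlowOscAtInf.add (hf : SlowOscAtInf f) (hg : SlowOscAtInf g) :
    SlowOscAtInf (fun s => f s + g s) := by
  rw [slowOscAtInf_iff] at *
  exact fun r hr hr1 => tendsto_osc_add (hf r hr hr1) (hg r hr hr1)

lemma SlowOscAtInf.mul (hbf : Bdd f) (hbg : Bdd g) (hf : SlowOscAtInf f) (hg : SlowOscAtInf g) :
    SlowOscAtInf (fun s => f s * g s) := by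
  rw [slowOscAtInf_iff] at *
  exact fun r hr hr1 => tendsto_osc_mul hbf hbg (hf r hr hr1) (hg r hr hr1)

lemma SlowOscAtInf.conj (hf : SlowOscAtInf f) : SlowOscAtInf (fun s => starRingEnd ℂ (f s)) := by
  simpa only [slowOscAtInf_iff, osc_conj] using hf

lemma slowOscAt_of_continuousAt (hf : ContinuousAt f lam) : SlowOscAt f lam := by
  refine slowOscAt_iff.2 fun r hr hr1 => tendsto_osc_of_tendsto hf.tendsto ?_
  refine ((tendsto_closedBall_smallSets lam).mono_left nhdsWithin_le_nhds).smallSets_mono ?_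
  filter_upwards [self_mem_nhdsWithin] with x (hx : 0 < x) s hs
  rw [Metric.mem_closedBall, Real.dist_eq, abs_le]
  rcases hs with ⟨h1, h2⟩ | ⟨h1, h2⟩ <;> constructor <;> nlinarith

lemma tendsto_setOf_le_abs_smallSets :
    Tendsto (fun R : ℝ => {s : ℝ | R ≤ |s|}) atTop (cocompact ℝ).smallSets := by
  rw [tendsto_smallSets_iff, cocompact_eq_atBot_atTop, ← comap_abs_atTop]
  rintro U ⟨V, hV, hVU⟩
  obtain ⟨a, ha⟩ := mem_atTop_sets.1 hV
  filter_upwards [eventually_ge_atTop a] with R hR s hs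
  exact hVU (ha _ (hR.trans hs))

lemma slowOscAtInf_of_tendsto {L : ℂ} (hf : Tendsto f (cocompact ℝ) (𝓝 L)) : SlowOscAtInf f := by
  refine slowOscAtInf_iff.2 fun r hr _ => tendsto_osc_of_tendsto hf ?_
  refine (tendsto_setOf_le_abs_smallSets.comp (tendsto_id.const_mul_atTop hr)).smallSets_mono ?_
  filter_upwards [eventually_ge_atTop 0] with x hx s hs
  simp only [Function.comp_apply, id, mem_ofPred_eq]
  rcases hs with ⟨h1, h2⟩ | ⟨h1, h2⟩
  · exact le_abs.2 (Or.inr (by linarith))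
  · exact le_abs.2 (Or.inl h1)

end SlowOsc

section SO

variable {f g : ℝ → ℂ} {t : Option ℝ}

lemma Bdd.add (hf : Bdd f) (hg : Bdd g) : Bdd (fun s => f s + g s) := by
  obtain ⟨M, hM⟩ := hf
  obtain ⟨N, hN⟩ := hg
  exact ⟨M + N, fun s => (norm_add_le _ _).trans (add_le_add (hM s) (hN s))⟩

lemma Bdd.mul (hf : Bdd f) (hg : Bdd g) : Bdd (fun s => f s * g s) := by
  obtain ⟨M, hM⟩ := hf
  obtain ⟨N, hN⟩ := hg
  refine ⟨M * N, fun s => ?_⟩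
  rw [norm_mul]
  exact mul_le_mul (hM s) (hN s) (norm_nonneg _) ((norm_nonneg _).trans (hM 0))

lemma Bdd.conj (hf : Bdd f) : Bdd (fun s => starRingEnd ℂ (f s)) := by
  simpa only [Bdd, RCLike.norm_conj] using hf

lemma CRdot.bdd (hf : CRdot f) : Bdd f := by
  obtain ⟨hc, L, hL⟩ := hf
  let f₀ : ZeroAtInftyContinuousMap ℝ ℂ :=
    ⟨⟨fun s => f s - L, hc.sub continuous_const⟩, by simpa using hL.sub_const L⟩
  obtain ⟨M, hM⟩ := isBounded_iff_forall_norm_le.1 f₀.isBounded_range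
  refine ⟨M + ‖L‖, fun s => ?_⟩
  have hs : ‖f s - L‖ ≤ M := hM _ ⟨s, rfl⟩
  calc ‖f s‖ = ‖(f s - L) + L‖ := by rw [sub_add_cancel]
    _ ≤ M + ‖L‖ := (norm_add_le _ _).trans (add_le_add hs le_rfl)

lemma CRdot.so (hf : CRdot f) : SO t f := by
  obtain ⟨hc, L, hL⟩ := hf
  cases t with
  | some lam =>
    exact ⟨CRdot.bdd ⟨hc, L, hL⟩, hc.continuousOn, ⟨L, hL⟩,
      slowOscAt_of_continuousAt hc.continuousAt⟩
  | none => exact ⟨CRdot.bdd ⟨hc, L, hL⟩, hc, slowOscAtInf_of_tendsto hL⟩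

lemma CRdot.const (c : ℂ) : CRdot (fun _ => c) := ⟨continuous_const, c, tendsto_const_nhds⟩

lemma SO.bdd (hf : SO t f) : Bdd f := by
  cases t <;> exact hf.1

lemma SO.add (hf : SO t f) (hg : SO t g) : SO t (fun s => f s + g s) := by
  cases t with
  | some lam =>
    obtain ⟨hbf, hcf, ⟨L, hL⟩, hsf⟩ := hf
    obtain ⟨hbg, hcg, ⟨K, hK⟩, hsg⟩ := hg
    exact ⟨hbf.add hbg, hcf.add hcg, ⟨L + K, hL.add hK⟩, hsf.add hsg⟩
  | none =>
    obtain ⟨hbf, hcf, hsf⟩ := hf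
    obtain ⟨hbg, hcg, hsg⟩ := hg
    exact ⟨hbf.add hbg, hcf.add hcg, hsf.add hsg⟩

lemma SO.mul (hf : SO t f) (hg : SO t g) : SO t (fun s => f s * g s) := by
  cases t with
  | some lam =>
    obtain ⟨hbf, hcf, ⟨L, hL⟩, hsf⟩ := hf
    obtain ⟨hbg, hcg, ⟨K, hK⟩, hsg⟩ := hg
    exact ⟨hbf.mul hbg, hcf.mul hcg, ⟨L * K, hL.mul hK⟩, hsf.mul hbf hbg hsg⟩
  | none =>
    obtain ⟨hbf, hcf, hsf⟩ := hf
    obtain ⟨hbg, hcg, hsg⟩ := hg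
    exact ⟨hbf.mul hbg, hcf.mul hcg, hsf.mul hbf hbg hsg⟩

lemma SO.conj (hf : SO t f) : SO t (fun s => starRingEnd ℂ (f s)) := by
  cases t with
  | some lam =>
    obtain ⟨hb, hc, ⟨L, hL⟩, hs⟩ := hf
    exact ⟨hb.conj, Complex.continuous_conj.comp_continuousOn hc,
      ⟨starRingEnd ℂ L, (Complex.continuous_conj.tendsto L).comp hL⟩, hs.conj⟩
  | none =>
    obtain ⟨hb, hc, hs⟩ := hf
    exact ⟨hb.conj, Complex.continuous_conj.comp hc, hs.conj⟩

end SO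

lemma SO.exists_tendsto_nhdsRdot {μ t : Option ℝ} {f : ℝ → ℂ} (hf : SO μ f) (hμt : μ ≠ t) :
    ∃ c, Tendsto f (nhdsRdot t) (𝓝 c) := by
  cases t with
  | some lam =>
    refine ⟨f lam, ContinuousAt.tendsto ?_⟩
    cases μ with
    | some ν =>
      exact hf.2.1.continuousAt (isOpen_compl_singleton.mem_nhds fun h => hμt (by rw [h]))
    | none => exact hf.2.1.continuousAt
  | none =>
    cases μ with
    | some ν => exact hf.2.2.1
    | none => exact absurd rfl hμt

lemma SOgen.exists_SO_add_tendsto_zero {g : ℝ → ℂ} (hg : SOgen g) (t : Option ℝ) :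
    ∃ h r : ℝ → ℂ, SO t h ∧ Tendsto r (nhdsRdot t) (𝓝 0) ∧ g = fun s => h s + r s := by
  induction hg with
  | base μ f hf =>
    by_cases hμt : μ = t
    · exact ⟨f, fun _ => 0, hμt ▸ hf, tendsto_const_nhds, by simp⟩
    · obtain ⟨c, hc⟩ := hf.exists_tendsto_nhdsRdot hμt
      exact ⟨fun _ => c, fun s => f s - c, (CRdot.const c).so, by simpa using hc.sub_const c,
        by simp⟩
  | add _ _ ihf ihg =>
    obtain ⟨h₁, r₁, hh₁, hr₁, rfl⟩ := ihf
    obtain ⟨h₂, r₂, hh₂, hr₂, rfl⟩ := ihg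
    exact ⟨fun s => h₁ s + h₂ s, fun s => r₁ s + r₂ s, hh₁.add hh₂, by simpa using hr₁.add hr₂,
      by ext; ring⟩
  | mul _ _ ihf ihg =>
    obtain ⟨h₁, r₁, hh₁, hr₁, rfl⟩ := ihf
    obtain ⟨h₂, r₂, hh₂, hr₂, rfl⟩ := ihg
    refine ⟨fun s => h₁ s * h₂ s, fun s => h₁ s * r₂ s + r₁ s * h₂ s + r₁ s * r₂ s, hh₁.mul hh₂,
      ?_, by ext; ring⟩
    have hr₁h₂ := hr₁.zero_mul_isBoundedUnder_le (isBoundedUnder_of hh₂.bdd)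
    have hh₁r₂ := isBoundedUnder_le_mul_tendsto_zero (isBoundedUnder_of hh₁.bdd) hr₂
    simpa using (hh₁r₂.add hr₁h₂).add (hr₁.mul hr₂)
  | smul c _ ih =>
    obtain ⟨h, r, hh, hr, rfl⟩ := ih
    exact ⟨fun s => c * h s, fun s => c * r s, (CRdot.const c).so.mul hh,
      by simpa using hr.const_mul c, by simp [mul_add]⟩
  | star _ ih =>
    obtain ⟨h, r, hh, hr, rfl⟩ := ih
    exact ⟨fun s => starRingEnd ℂ (h s), fun s => starRingEnd ℂ (r s), hh.conj,
      by simpa [Function.comp_def] using (Complex.continuous_conj.tendsto 0).comp hr, by simp⟩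

lemma volume_pos_of_mem_nhdsRdot {t : Option ℝ} {V : Set ℝ} (hV : V ∈ nhdsRdot t) :
    0 < volume V := by
  cases t with
  | some lam => exact Measure.measure_pos_of_mem_nhds volume hV
  | none =>
    rw [nhdsRdot, cocompact_eq_atBot_atTop] at hV
    obtain ⟨a, ha⟩ := mem_atTop_sets.1 (mem_sup.1 hV).2
    calc (0 : ENNReal) < volume (Ici a) := by simp
      _ ≤ volume V := measure_mono fun s hs => ha s hs

lemma exists_bump_nhdsRdot (t : Option ℝ) {U : Set ℝ} (hU : U ∈ nhdsRdot t) :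
    ∃ b : ℝ → ℝ, CRdot (fun s => (b s : ℂ)) ∧ (∀ s, b s ∈ Icc (0 : ℝ) 1) ∧
      (∀ s, b s ≠ 0 → s ∈ U) ∧ ∀ᶠ s in nhdsRdot t, b s = 1 := by
  cases t with
  | some lam =>
    obtain ⟨δ, hδ, hδU⟩ := Metric.mem_nhds_iff.1 hU
    let φ : ContDiffBump lam := ⟨δ / 2, δ, half_pos hδ, half_lt_self hδ⟩
    refine ⟨φ, ⟨Complex.continuous_ofReal.comp φ.continuous, 0, ?_⟩, fun s => ⟨φ.nonneg, φ.le_one⟩,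
      fun s hs => hδU (φ.support_eq ▸ hs), φ.eventuallyEq_one⟩
    simpa [Function.comp_def] using
      (Complex.continuous_ofReal.tendsto 0).comp φ.hasCompactSupport.is_zero_at_infty
  | none =>
    obtain ⟨K, hK, hKU⟩ := mem_cocompact.1 hU
    obtain ⟨R, hR, hKR⟩ := hK.isBounded.subset_closedBall_lt 0 0
    let φ : ContDiffBump (0 : ℝ) := ⟨R, R + 1, hR, lt_add_one R⟩
    have hφ : Tendsto (fun s => ((1 - φ s : ℝ) : ℂ)) (cocompact ℝ) (𝓝 1) := by
      simpa [Function.comp_def] using ((Complex.continuous_ofReal.tendsto 0).comp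
        φ.hasCompactSupport.is_zero_at_infty).const_sub 1
    have hφc : Continuous fun s => ((1 - φ s : ℝ) : ℂ) :=
      Complex.continuous_ofReal.comp (continuous_const.sub φ.continuous)
    refine ⟨fun s => 1 - φ s, ⟨hφc, 1, hφ⟩,
      fun s => ⟨sub_nonneg.2 φ.le_one, sub_le_self 1 φ.nonneg⟩, fun s hs => hKU fun hsK => ?_, ?_⟩
    · exact hs (sub_eq_zero.2 (φ.one_of_mem_closedBall (hKR hsK)).symm)
    · filter_upwards [(isCompact_closedBall (0 : ℝ) (R + 1)).compl_mem_cocompact] with s hs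
      rw [φ.zero_of_le_dist (not_le.1 (Metric.mem_closedBall.not.1 hs)).le, sub_zero]

lemma InFiber.apply_eq_one {t : Option ℝ} {η : CharOn {f | SO t f}}
    (hη : InFiber {f | SO t f} η t) {b : ℝ → ℂ} (hb : CRdot b) (hb1 : ∀ᶠ s in nhdsRdot t, b s = 1) :
    η.φ b = 1 := by
  cases t with
  | some lam => rw [hη b (hb.so (t := some lam)) hb]; exact hb1.self_of_nhds
  | none =>
    exact hη b (hb.so (t := none)) hb 1 (tendsto_const_nhds.congr' (hb1.mono fun _ => Eq.symm))

lemma CRdot.specIn_subset {t : Option ℝ} {f : ℝ → ℂ} {C : Set ℂ} (hC : IsClosed C) (hf : CRdot f)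
    (hfC : ∀ s, f s ∈ C) : specIn {g | SO t g} f ⊆ C := by
  intro z hz
  by_contra hzC
  have hne : ∀ s, f s - z ≠ 0 := fun s h => hzC (sub_eq_zero.1 h ▸ hfC s)
  obtain ⟨hc, L, hL⟩ := hf
  have hLz : L - z ≠ 0 := fun h => hzC (sub_eq_zero.1 h ▸ hC.mem_of_tendsto hL (.of_forall hfC))
  refine hz ⟨fun s => (f s - z)⁻¹, ?_, .of_forall fun s => mul_inv_cancel₀ (hne s)⟩
  exact CRdot.so ⟨(hc.sub continuous_const).inv₀ hne, (L - z)⁻¹, (hL.sub_const z).inv₀ hLz⟩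

lemma isPositiveIn_ofReal {t : Option ℝ} {b : ℝ → ℝ} (hb : CRdot (fun s => (b s : ℂ)))
    (hb0 : ∀ s, 0 ≤ b s) : IsPositiveIn {f | SO t f} (fun s => (b s : ℂ)) := by
  refine ⟨fun s => Complex.ofReal_im _,
    hb.specIn_subset ?_ fun s => ⟨by simpa using hb0 s, Complex.ofReal_im _⟩⟩
  exact (isClosed_le continuous_const Complex.continuous_re).inter
    (isClosed_eq Complex.continuous_im continuous_const)

section LInfty

variable {α E : Type*} [MeasurableSpace α] {μ : Measure α} [NormedAddCommGroup E]

lemma eLpNorm_top_eq_one {f : α → E} (hf : ∀ s, ‖f s‖ ≤ 1) (hpos : 0 < μ {s | ‖f s‖ = 1}) :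
    eLpNorm f ⊤ μ = 1 := by
  rw [eLpNorm_exponent_top]
  refine le_antisymm (by simpa using eLpNormEssSup_le_of_ae_bound (μ := μ) (ae_of_all _ hf)) ?_
  by_contra! hlt
  refine hpos.ne' (measure_eq_zero_iff_ae_notMem.2 ?_)
  filter_upwards [enorm_ae_le_eLpNormEssSup f μ] with s hs h1
  have : ‖f s‖ₑ = 1 := by rw [← ofReal_norm, show ‖f s‖ = 1 from h1, ENNReal.ofReal_one]
  exact (hs.trans_lt hlt).ne this

lemma eLpNorm_top_mul_mul_sub_le {R : Type*} [NormedCommRing R] {b x g h r : α → R}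
    (hb : ∀ s, ‖b s‖ ≤ 1) (hg : g = fun s => h s + r s) {δ : ℝ} (hδ : 0 ≤ δ)
    (hr : ∀ s, b s ≠ 0 → ‖r s‖ ≤ δ) :
    eLpNorm (fun s => b s * x s * b s - b s * (b s * h s)) ⊤ μ ≤
      eLpNorm (fun s => x s - g s) ⊤ μ + ENNReal.ofReal δ := by
  have hbb : ∀ s z, ‖b s * b s * z‖ ≤ ‖z‖ := fun s z => calc
    ‖b s * b s * z‖ ≤ ‖b s‖ * ‖b s‖ * ‖z‖ :=
      (norm_mul_le _ _).trans (mul_le_mul_of_nonneg_right (norm_mul_le _ _) (norm_nonneg _))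
    _ ≤ 1 * 1 * ‖z‖ := by gcongr <;> exact hb s
    _ = ‖z‖ := by rw [one_mul, one_mul]
  have hsplit : (fun s => b s * x s * b s - b s * (b s * h s)) =
      (fun s => b s * b s * (x s - g s)) + fun s => b s * b s * r s := by
    subst hg; ext s; simp only [Pi.add_apply]; ring
  rw [hsplit, eLpNorm_exponent_top]
  refine eLpNormEssSup_add_le.trans (add_le_add ?_ ?_)
  · exact eLpNorm_mono fun s => hbb s _
  · refine eLpNormEssSup_le_of_ae_bound (ae_of_all _ fun s => ?_)
    by_cases hs : b s = 0
    · simp [hs, hδ]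
    · exact (hbb s _).trans (hr s hs)

end LInfty

/-- For every t ∈ Ṙ, SO^◇ is SO_t-compressible modulo every character η in the fiber
M_t(SO_t): for each x ∈ SO^◇ and ε > 0 there exist a positive b ∈ SO_t with
|η(b)| = ‖b‖ = 1 and y ∈ SO_t with ‖b x b − y‖_∞ < ε. -/
theorem SOdiamond_compressible (t : Option ℝ) (η : CharOn {f | SO t f})
    (hη : InFiber {f | SO t f} η t) (x : ℝ → ℂ) (hx : SOdiamond x)
    (ε : ℝ) (hε : 0 < ε) :
    ∃ b y : ℝ → ℂ, SO t b ∧ SO t y ∧ IsPositiveIn {f | SO t f} b ∧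
      ‖η.φ b‖ = 1 ∧ eLpNorm b ⊤ volume = 1 ∧
      eLpNorm (fun s => b s * x s * b s - y s) ⊤ volume < ENNReal.ofReal ε := by
  obtain ⟨g, hg, hxg⟩ := hx.2 (ε / 2) (by linarith)
  obtain ⟨h, r, hh, hr, hghr⟩ := hg.exists_SO_add_tendsto_zero t
  have hrsmall : {s | ‖r s‖ ≤ ε / 4} ∈ nhdsRdot t :=
    (tendsto_zero_iff_norm_tendsto_zero.1 hr).eventually (ge_mem_nhds (by positivity))
  obtain ⟨b, hbC, hb01, hbr, hb1⟩ := exists_bump_nhdsRdot t hrsmall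
  have hbSO : SO t (fun s => (b s : ℂ)) := hbC.so
  have hbnorm : ∀ s, ‖(b s : ℂ)‖ ≤ 1 := fun s => by
    rw [Complex.norm_real, Real.norm_of_nonneg (hb01 s).1]; exact (hb01 s).2
  have hb1' : ∀ᶠ s in nhdsRdot t, (b s : ℂ) = 1 :=
    hb1.mono fun s hs => by rw [hs, Complex.ofReal_one]
  refine ⟨_, _, hbSO, hbSO.mul (hbSO.mul hh), isPositiveIn_ofReal hbC fun s => (hb01 s).1,
    by rw [hη.apply_eq_one hbC hb1', norm_one], eLpNorm_top_eq_one hbnorm ?_, ?_⟩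
  · exact (volume_pos_of_mem_nhdsRdot hb1').trans_le
      (measure_mono fun s (hs : (b s : ℂ) = 1) => by rw [mem_ofPred_eq, hs, norm_one])
  · calc _ ≤ eLpNorm (fun s => x s - g s) ⊤ volume + ENNReal.ofReal (ε / 4) :=
          eLpNorm_top_mul_mul_sub_le hbnorm hghr (by positivity)
            fun s hs => hbr s (by exact_mod_cast hs)
      _ < ENNReal.ofReal (ε / 2) + ENNReal.ofReal (ε / 4) :=
          ENNReal.add_lt_add_right ENNReal.ofReal_ne_top hxg
      _ = ENNReal.ofReal (ε / 2 + ε / 4) :=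
          (ENNReal.ofReal_add (by positivity) (by positivity)).symm
      _ < ENNReal.ofReal ε := (ENNReal.ofReal_lt_ofReal_iff hε).2 (by linarith)
end
end

section
/- Let A ⊆ B ⊆ C be commutative unital Banach algebras with common unit and continuous homomorphic embeddings, with A dense in B. If every multiplicative linear functional φ ∈ M(A) has a unique extension φ′ ∈ M(C), then every multiplicative linear functional ψ ∈ M(B) has a unique extension ψ′ ∈ M(C). -/
open MeasureTheory Filter Topology Set

noncomputable section

namespace WeakDual.CharacterSpace

theorem eq_of_eqOn_denseRange {𝕜 A B : Type*} [CommSemiring 𝕜] [TopologicalSpace 𝕜]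
    [T2Space 𝕜] [ContinuousAdd 𝕜] [ContinuousConstSMul 𝕜 𝕜] [NonUnitalNonAssocSemiring B]
    [TopologicalSpace B] [Module 𝕜 B] {f : A → B} (hf : DenseRange f)
    {φ ψ : characterSpace 𝕜 B} (h : ∀ a, φ (f a) = ψ (f a)) : φ = ψ :=
  ext <| congrFun <| hf.equalizer (map_continuous φ) (map_continuous ψ) (funext h)

variable {𝕜 A B : Type*} [NontriviallyNormedField 𝕜] [NormedRing A] [NormedAlgebra 𝕜 A]
  [CompleteSpace A] [NormedRing B] [NormedAlgebra 𝕜 B]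

/-- No continuity of `ι` is needed: characters of a Banach algebra are automatically continuous. -/
def comap (ι : A →ₐ[𝕜] B) (φ : characterSpace 𝕜 B) : characterSpace 𝕜 A :=
  equivAlgHom.symm ((toAlgHom φ).comp ι)

@[simp]
theorem comap_apply (ι : A →ₐ[𝕜] B) (φ : characterSpace 𝕜 B) (a : A) :
    comap ι φ a = φ (ι a) :=
  rfl

theorem comap_injective {ι : A →ₐ[𝕜] B} (hι : DenseRange ι) :
    Function.Injective (comap ι) := fun φ ψ h =>
  eq_of_eqOn_denseRange hι fun a => by rw [← comap_apply, h, comap_apply]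

end WeakDual.CharacterSpace

open WeakDual.CharacterSpace in
theorem character_extension_through_dense_subalgebra_general
    {A B C : Type*}
    [NormedCommRing A] [NormedAlgebra ℂ A] [CompleteSpace A]
    [NormedCommRing B] [NormedAlgebra ℂ B] [CompleteSpace B]
    [NormedCommRing C] [NormedAlgebra ℂ C]
    (ιAB : A →ₐ[ℂ] B) (ιBC : B →ₐ[ℂ] C)
    (hdense : DenseRange ιAB)
    (hext : ∀ φ : WeakDual.characterSpace ℂ A,
      ∃! φ' : WeakDual.characterSpace ℂ C, ∀ a : A, φ'.1 (ιBC (ιAB a)) = φ.1 a) :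
    ∀ ψ : WeakDual.characterSpace ℂ B,
      ∃! ψ' : WeakDual.characterSpace ℂ C, ∀ b : B, ψ'.1 (ιBC b) = ψ.1 b := by
  intro ψ
  obtain ⟨φ', hφ'_ext, hφ'_unique⟩ := hext (comap ιAB ψ)
  have hφ'_comap : comap ιBC φ' = ψ :=
    comap_injective hdense <| ext fun a => hφ'_ext a
  exact ⟨φ', fun b => congrArg (· b) hφ'_comap,
    fun ψ' hψ' => hφ'_unique ψ' fun a => hψ' (ιAB a)⟩

/-- Let A ⊆ B ⊆ C be commutative unital Banach algebras with continuous injective unital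
embeddings, A dense in B. If every character of A extends uniquely to a character of C,
then every character of B extends uniquely to a character of C. -/
theorem character_extension_through_dense_subalgebra
    {A B C : Type*}
    [NormedCommRing A] [NormedAlgebra ℂ A] [CompleteSpace A]
    [NormedCommRing B] [NormedAlgebra ℂ B] [CompleteSpace B]
    [NormedCommRing C] [NormedAlgebra ℂ C] [CompleteSpace C]
    (ιAB : A →ₐ[ℂ] B) (ιBC : B →ₐ[ℂ] C)
    (hABcont : Continuous ιAB) (hBCcont : Continuous ιBC)
    (hABinj : Function.Injective ιAB) (hBCinj : Function.Injective ιBC)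
    (hdense : DenseRange ιAB)
    (hext : ∀ φ : WeakDual.characterSpace ℂ A,
      ∃! φ' : WeakDual.characterSpace ℂ C, ∀ a : A, φ'.1 (ιBC (ιAB a)) = φ.1 a) :
    ∀ ψ : WeakDual.characterSpace ℂ B,
      ∃! ψ' : WeakDual.characterSpace ℂ C, ∀ b : B, ψ'.1 (ιBC b) = ψ.1 b :=
  character_extension_through_dense_subalgebra_general ιAB ιBC hdense hext
end
end
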